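/- arXiv:1105.5169 — 2 statements merged into one kernel-verified Lean document; each statement's English description precedes it below -/
import Mathlib

section
/- Let V be a complex vector space equipped with a 𝔤-module structure for a Lie algebra 𝔤 over ℂ, a ℂ-linear action of a group K∞, and a ℂ-linear action of a group H, such that the H-action commutes with the 𝔤-action and with the K∞-action (h·(X·v) = X·(h·v) and h·(κ·v) = κ·(h·v) for all h ∈ H, X ∈ 𝔤, κ ∈ K∞, v ∈ V). Let K be a subgroup of H such that for every h ∈ H the double coset KhK is a finite disjoint union of left cosets of K. Let Φ ∈ V be a nonzero vector such that: (i) Φ is fixed by every element of K; (ii) for every h ∈ H, writing KhK as a disjoint union of left cosets h₁K, …, h_nK, the vector Σ_{i=1}^n h_i·Φ is a scalar multiple of Φ; (iii) V equals the smallest subspace of V containing Φ that is stable under the actions of 𝔤, K∞ and H. Let M be the smallest subspace of V containing Φ that is stable under the actions of 𝔤 and K∞. Then every vector of V fixed by every element of K lies in M. -/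
/-- The double coset `KhK` of `h` with respect to a subgroup `K`. -/
def doubleCoset {H : Type*} [Group H] (K : Subgroup H) (h : H) : Set H :=
  {x : H | ∃ k₁ ∈ K, ∃ k₂ ∈ K, x = k₁ * h * k₂}

/-- The left translate `aS` of a set `S` by a group element `a`. -/
def leftTranslate {H : Type*} [Group H] (a : H) (S : Set H) : Set H :=
  {x : H | ∃ s ∈ S, x = a * s}

/-!
Every operator on `V` commuting with `𝔤` and `K∞` that has `Φ` as an eigenvector acts on `M`,
which is generated by `Φ`, by the same scalar. Applied to `σ k` (`k ∈ K`) and to the Hecke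
operators `∑ᵢ σ hᵢ`, this shows that `M` is pointwise `K`-fixed and Hecke-stable; in particular
`σ h m` (`m ∈ M`) only depends on the coset `hK`. Since `V = ∑ₕ σ h M`, a `K`-fixed vector is
`v = ∑ⱼ σ hⱼ mⱼ`, and it equals its average over `K/N` for a normal subgroup `N` of finite
index fixing every coset `hⱼK`. Counting orbits, the average of `σ hⱼ mⱼ` is a positive rational
multiple of the Hecke operator of `hⱼ` applied to `mⱼ`, hence lies in `M`.
-/

open MulAction

section OrbitAverage

variable {G X E : Type*} [Group G] [MulAction G X] [AddCommMonoid E]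
  (N : Subgroup G) [N.Normal] [Fintype (G ⧸ N)]

theorem sum_out_smul_eq_of_mem_orbit {x y : X} (hN : N ≤ stabilizer G x) (hy : y ∈ orbit G x)
    (f : X → E) : ∑ q : G ⧸ N, f (q.out • y) = ∑ q : G ⧸ N, f (q.out • x) := by
  obtain ⟨g, rfl⟩ := hy
  refine (Fintype.sum_congr _ _ fun q => congrArg f ?_).trans
    (Equiv.sum_comp (Equiv.mulRight (g : G ⧸ N)) fun q : G ⧸ N => f (q.out • x))
  obtain ⟨n, hn⟩ := QuotientGroup.mk_out_eq_mul N (q.out * g)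
  show q.out • g • x = (q * g).out • x
  rw [← QuotientGroup.out_eq' q, ← QuotientGroup.mk_mul, hn, QuotientGroup.out_eq', mul_smul,
    mem_stabilizer_iff.1 (hN n.2), mul_smul]

theorem card_orbit_nsmul_sum_out_smul {x : X} [Fintype (orbit G x)]
    (hN : N ≤ stabilizer G x) (f : X → E) :
    Fintype.card (orbit G x) • ∑ q : G ⧸ N, f (q.out • x) =
      Fintype.card (G ⧸ N) • ∑ z : orbit G x, f z := by
  calc _ = ∑ z : orbit G x, ∑ q : G ⧸ N, f (q.out • (z : X)) := by
        rw [← Finset.card_univ, ← Finset.sum_const]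
        exact Fintype.sum_congr _ _ fun z => (sum_out_smul_eq_of_mem_orbit N hN z.2 f).symm
    _ = ∑ q : G ⧸ N, ∑ z : orbit G x, f (q.out • (z : X)) := Finset.sum_comm
    _ = ∑ q : G ⧸ N, ∑ z : orbit G x, f z :=
        Fintype.sum_congr _ _ fun q => Equiv.sum_comp (toPerm q.out) fun z : orbit G x => f z
    _ = _ := by rw [Finset.sum_const, Finset.card_univ]

theorem finiteIndex_stabilizer_of_finite_orbit (x : X) [Finite (orbit G x)] :
    (stabilizer G x).FiniteIndex :=
  ⟨by
    rw [index_stabilizer]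
    exact ((Set.ncard_pos (Set.toFinite _)).2 ⟨x, mem_orbit_self x⟩).ne'⟩

end OrbitAverage

section DoubleCoset

variable {H : Type*} [Group H] {K : Subgroup H} {h : H} {n : ℕ} {r : Fin n → H}

theorem orbit_mk_eq_range_of_doubleCoset_eq
    (hU : doubleCoset K h = ⋃ i, leftTranslate (r i) (K : Set H)) :
    orbit K (h : H ⧸ K) = Set.range fun i => (r i : H ⧸ K) := by
  ext z
  constructor
  · rintro ⟨k, rfl⟩
    have hk : (k : H) * h ∈ doubleCoset K h := ⟨k, k.2, 1, K.one_mem, by rw [mul_one]⟩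
    rw [hU] at hk
    obtain ⟨i, s, hs, he⟩ := Set.mem_iUnion.1 hk
    refine ⟨i, ?_⟩
    show (r i : H ⧸ K) = (k : H) • (h : H ⧸ K)
    rw [MulAction.Quotient.smul_coe, smul_eq_mul, he, QuotientGroup.mk_mul_of_mem _ hs]
  · rintro ⟨i, rfl⟩
    have hr : r i ∈ doubleCoset K h := hU ▸ Set.mem_iUnion.2 ⟨i, 1, K.one_mem, (mul_one _).symm⟩
    obtain ⟨k₁, hk₁, k₂, hk₂, he⟩ := hr
    refine ⟨⟨k₁, hk₁⟩, ?_⟩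
    show k₁ • (h : H ⧸ K) = r i
    rw [MulAction.Quotient.smul_coe, smul_eq_mul, he, QuotientGroup.mk_mul_of_mem _ hk₂]

theorem injective_mk_of_pairwise_disjoint
    (hD : ∀ i j, i ≠ j →
      Disjoint (leftTranslate (r i) (K : Set H)) (leftTranslate (r j) (K : Set H))) :
    Function.Injective fun i => (r i : H ⧸ K) := by
  intro i j hij
  by_contra hne
  refine Set.disjoint_left.1 (hD i j hne) ⟨(r i)⁻¹ * r j, QuotientGroup.eq.1 hij, ?_⟩
    ⟨1, K.one_mem, (mul_one _).symm⟩
  rw [mul_inv_cancel_left]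

noncomputable def orbitEquivOfDecomposition
    (hU : doubleCoset K h = ⋃ i, leftTranslate (r i) (K : Set H))
    (hD : ∀ i j, i ≠ j →
      Disjoint (leftTranslate (r i) (K : Set H)) (leftTranslate (r j) (K : Set H))) :
    Fin n ≃ orbit K (h : H ⧸ K) :=
  (Equiv.ofInjective _ (injective_mk_of_pairwise_disjoint hD)).trans
    (Equiv.setCongr (orbit_mk_eq_range_of_doubleCoset_eq hU).symm)

end DoubleCoset

section FixedVectors

variable {R V H : Type*} [Semiring R] [AddCommMonoid V] [Module R V] [Group H]
  (σ : H →* (V ≃ₗ[R] V)) {K : Subgroup H} {m : V}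

theorem apply_out_mk_of_fixed (hm : ∀ k ∈ K, σ k m = m) (h : H) :
    σ (h : H ⧸ K).out m = σ h m := by
  obtain ⟨k, hk⟩ := QuotientGroup.mk_out_eq_mul K h
  rw [hk, map_mul, LinearEquiv.mul_apply, hm k k.2]

theorem apply_apply_out_of_fixed (hm : ∀ k ∈ K, σ k m = m) (g : H) (z : H ⧸ K) :
    σ g (σ z.out m) = σ (g • z).out m := by
  conv_rhs => rw [← QuotientGroup.out_eq' z, MulAction.Quotient.smul_coe, smul_eq_mul,
    apply_out_mk_of_fixed σ hm, map_mul, LinearEquiv.mul_apply]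

theorem sum_orbit_apply_out_eq_sum_apply {h : H} {n : ℕ} {r : Fin n → H}
    (hm : ∀ k ∈ K, σ k m = m) [Fintype (orbit K (h : H ⧸ K))]
    (hU : doubleCoset K h = ⋃ i, leftTranslate (r i) (K : Set H))
    (hD : ∀ i j, i ≠ j →
      Disjoint (leftTranslate (r i) (K : Set H)) (leftTranslate (r j) (K : Set H))) :
    ∑ z : orbit K (h : H ⧸ K), σ (z : H ⧸ K).out m = ∑ i, σ (r i) m :=
  (Fintype.sum_equiv (orbitEquivOfDecomposition hU hD) _ _
    fun i => (apply_out_mk_of_fixed σ hm (r i)).symm).symm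

end FixedVectors

section GeneratedSubmodule

variable {R 𝔤 V Kinf : Type*} [CommRing R] [LieRing 𝔤] [LieAlgebra R 𝔤]
  [AddCommGroup V] [Module R V] [LieRingModule 𝔤 V] [LieModule R 𝔤 V] [Monoid Kinf]
  (ρ : Kinf →* (V ≃ₗ[R] V)) {Φ : V} {M : Submodule R V}

theorem le_eigenspace_of_commute
    (hMmin : ∀ W : Submodule R V, Φ ∈ W →
      (∀ X : 𝔤, ∀ v ∈ W, ⁅X, v⁆ ∈ W) → (∀ κ : Kinf, ∀ v ∈ W, ρ κ v ∈ W) → M ≤ W)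
    {T : Module.End R V} (hT𝔤 : ∀ (X : 𝔤) (v : V), T ⁅X, v⁆ = ⁅X, T v⁆)
    (hTK : ∀ (κ : Kinf) (v : V), T (ρ κ v) = ρ κ (T v)) {c : R} (hΦ : T Φ = c • Φ) :
    M ≤ T.eigenspace c := by
  refine hMmin _ (Module.End.mem_eigenspace_iff.2 hΦ) (fun X v hv => ?_) (fun κ v hv => ?_) <;>
    rw [Module.End.mem_eigenspace_iff] at hv ⊢
  · rw [hT𝔤, hv, lie_smul]
  · rw [hTK, hv, map_smul]

variable {H : Type*} [Group H] (σ : H →* (V ≃ₗ[R] V))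

theorem sum_apply_mem_of_sum_apply_eq_smul
    (hcomm𝔤 : ∀ (h : H) (X : 𝔤) (v : V), σ h ⁅X, v⁆ = ⁅X, σ h v⁆)
    (hcommK : ∀ (h : H) (κ : Kinf) (v : V), σ h (ρ κ v) = ρ κ (σ h v))
    (hMmin : ∀ W : Submodule R V, Φ ∈ W →
      (∀ X : 𝔤, ∀ v ∈ W, ⁅X, v⁆ ∈ W) → (∀ κ : Kinf, ∀ v ∈ W, ρ κ v ∈ W) → M ≤ W)
    {ι : Type*} [Fintype ι] (r : ι → H) {c : R} (hc : ∑ i, σ (r i) Φ = c • Φ)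
    {m : V} (hm : m ∈ M) : ∑ i, σ (r i) m ∈ M := by
  have := le_eigenspace_of_commute ρ hMmin (T := ∑ i, (σ (r i) : Module.End R V))
    (by simp [hcomm𝔤, lie_sum]) (by simp [hcommK]) (by simpa using hc) hm
  simp only [Module.End.mem_genEigenspace_one, LinearMap.coe_sum, LinearEquiv.coe_coe,
    Finset.sum_apply] at this
  rw [this]
  exact M.smul_mem c hm

theorem iSup_map_eq_top
    (hcomm𝔤 : ∀ (h : H) (X : 𝔤) (v : V), σ h ⁅X, v⁆ = ⁅X, σ h v⁆)
    (hcommK : ∀ (h : H) (κ : Kinf) (v : V), σ h (ρ κ v) = ρ κ (σ h v))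
    (hgen : ∀ W : Submodule R V, Φ ∈ W →
      (∀ X : 𝔤, ∀ v ∈ W, ⁅X, v⁆ ∈ W) → (∀ κ : Kinf, ∀ v ∈ W, ρ κ v ∈ W) →
      (∀ h : H, ∀ v ∈ W, σ h v ∈ W) → W = ⊤)
    (hΦM : Φ ∈ M) (hM𝔤 : ∀ X : 𝔤, ∀ v ∈ M, ⁅X, v⁆ ∈ M)
    (hMK : ∀ κ : Kinf, ∀ v ∈ M, ρ κ v ∈ M) :
    ⨆ h : H, M.map (σ h : V →ₗ[R] V) = ⊤ := by
  set W := ⨆ h : H, M.map (σ h : V →ₗ[R] V)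
  have hW : ∀ T : Module.End R V, (∀ h, ∀ m ∈ M, T (σ h m) ∈ W) → ∀ v ∈ W, T v ∈ W :=
    fun T hT => (iSup_le fun h => by rintro _ ⟨m, hm, rfl⟩; exact hT h m hm : W ≤ W.comap T)
  have hmem : ∀ h, ∀ m ∈ M, σ h m ∈ W := fun h m hm =>
    Submodule.mem_iSup_of_mem h ⟨m, hm, rfl⟩
  refine hgen W (by simpa using hmem 1 Φ hΦM) (fun X => hW (LieModule.toEnd R 𝔤 V X) ?_)
    (fun κ => hW (ρ κ) ?_) (fun h' => hW (σ h') ?_) <;> intro h m hm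
  · simpa [← hcomm𝔤] using hmem h _ (hM𝔤 X m hm)
  · simpa [← hcommK] using hmem h _ (hMK κ m hm)
  · simpa using hmem (h' * h) m hm

end GeneratedSubmodule

theorem Submodule.mem_of_nsmul_mem {R V : Type*} [DivisionRing R] [CharZero R] [AddCommGroup V]
    [Module R V] (p : Submodule R V) {n : ℕ} (hn : n ≠ 0) {v : V} (h : n • v ∈ p) : v ∈ p := by
  rwa [← Nat.cast_smul_eq_nsmul R, Submodule.smul_mem_iff _ (Nat.cast_ne_zero.2 hn)] at h

section Averaging

variable {R V H : Type*} [Field R] [CharZero R] [AddCommGroup V] [Module R V] [Group H]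
  (σ : H →* (V ≃ₗ[R] V)) {K : Subgroup H} {M : Submodule R V}

theorem sum_apply_out_apply_mem (hMfix : ∀ m ∈ M, ∀ k ∈ K, σ k m = m) {h : H}
    [Fintype (orbit K (h : H ⧸ K))]
    (hHecke : ∀ m ∈ M, ∑ z : orbit K (h : H ⧸ K), σ (z : H ⧸ K).out m ∈ M)
    (N : Subgroup K) [N.Normal] [Fintype (K ⧸ N)] (hN : N ≤ stabilizer K (h : H ⧸ K))
    {m : V} (hm : m ∈ M) : ∑ q : K ⧸ N, σ q.out (σ h m) ∈ M := by
  have hfix := hMfix m hm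
  have key := card_orbit_nsmul_sum_out_smul N hN fun z => σ z.out m
  have hsmul : ∀ q : K ⧸ N, σ q.out (σ h m) = σ (q.out • (h : H ⧸ K)).out m := fun q => by
    rw [← apply_out_mk_of_fixed σ hfix h, apply_apply_out_of_fixed σ hfix]
    rfl
  rw [Fintype.sum_congr _ _ hsmul]
  have : Nonempty (orbit K (h : H ⧸ K)) := ⟨⟨_, mem_orbit_self _⟩⟩
  refine M.mem_of_nsmul_mem (Fintype.card_ne_zero (α := orbit K (h : H ⧸ K))) ?_
  rw [key]
  exact M.nsmul_mem (hHecke m hm) _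

theorem mem_of_mem_iSup_map_of_fixed (hMfix : ∀ m ∈ M, ∀ k ∈ K, σ k m = m)
    [∀ h : H, Fintype (orbit K (h : H ⧸ K))]
    (hHecke : ∀ h : H, ∀ m ∈ M, ∑ z : orbit K (h : H ⧸ K), σ (z : H ⧸ K).out m ∈ M)
    {v : V} (hvM : v ∈ ⨆ h : H, M.map (σ h : V →ₗ[R] V)) (hv : ∀ k ∈ K, σ k v = v) :
    v ∈ M := by
  obtain ⟨f, hfM, rfl⟩ := (Submodule.mem_iSup_iff_exists_finsupp _ v).1 hvM
  choose m hm hfm using hfM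
  let N := (⨅ h ∈ f.support, stabilizer K (h : H ⧸ K)).normalCore
  have : (⨅ h ∈ f.support, stabilizer K (h : H ⧸ K)).FiniteIndex :=
    Subgroup.finiteIndex_iInf' _ fun h _ => finiteIndex_stabilizer_of_finite_orbit _
  let := N.fintypeQuotientOfFiniteIndex
  have hsum : Fintype.card (K ⧸ N) • f.sum (fun _ x => x) =
      ∑ h ∈ f.support, ∑ q : K ⧸ N, σ q.out (σ h (m h)) := by
    rw [Finset.sum_comm, ← Finset.card_univ, ← Finset.sum_const]
    refine Fintype.sum_congr _ _ fun q => ?_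
    rw [← hv _ q.out.2, Finsupp.sum, map_sum]
    exact Finset.sum_congr rfl fun h _ => congrArg _ (hfm h).symm
  refine M.mem_of_nsmul_mem (Fintype.card_ne_zero (α := K ⧸ N)) ?_
  rw [hsum]
  exact M.sum_mem fun h hh => sum_apply_out_apply_mem σ hMfix (hHecke h) N
    (Subgroup.normalCore_le _ |>.trans (iInf₂_le h hh)) (hm h)

end Averaging

theorem stmt_9_general {𝔤 V Kinf H : Type*} [LieRing 𝔤] [LieAlgebra ℂ 𝔤]
    [AddCommGroup V] [Module ℂ V] [LieRingModule 𝔤 V] [LieModule ℂ 𝔤 V]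
    [Group Kinf] [Group H]
    (ρ : Kinf →* (V ≃ₗ[ℂ] V)) (σ : H →* (V ≃ₗ[ℂ] V))
    -- the `H`-action commutes with the `𝔤`-action and the `K∞`-action:
    (hcomm𝔤 : ∀ (h : H) (X : 𝔤) (v : V), σ h ⁅X, v⁆ = ⁅X, σ h v⁆)
    (hcommK : ∀ (h : H) (κ : Kinf) (v : V), σ h (ρ κ v) = ρ κ (σ h v))
    (K : Subgroup H)
    (hdec : ∀ h : H, ∃ (n : ℕ) (r : Fin n → H),
      doubleCoset K h = ⋃ i, leftTranslate (r i) (K : Set H) ∧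
      ∀ i j, i ≠ j →
        Disjoint (leftTranslate (r i) (K : Set H)) (leftTranslate (r j) (K : Set H)))
    (Φ : V)
    -- (i) `Φ` is fixed by every element of `K`:
    (hfix : ∀ k ∈ K, σ k Φ = Φ)
    -- (ii) `Φ` is an eigenvector of all Hecke operators:
    (heigen : ∀ (h : H) (n : ℕ) (r : Fin n → H),
      doubleCoset K h = ⋃ i, leftTranslate (r i) (K : Set H) →
      (∀ i j, i ≠ j →
        Disjoint (leftTranslate (r i) (K : Set H)) (leftTranslate (r j) (K : Set H))) →
      ∃ c : ℂ, ∑ i, σ (r i) Φ = c • Φ)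
    -- (iii) `V` is generated by `Φ` under the actions of `𝔤`, `K∞` and `H`:
    (hgen : ∀ W : Submodule ℂ V, Φ ∈ W →
      (∀ X : 𝔤, ∀ v ∈ W, ⁅X, v⁆ ∈ W) → (∀ κ : Kinf, ∀ v ∈ W, ρ κ v ∈ W) →
      (∀ h : H, ∀ v ∈ W, σ h v ∈ W) → W = ⊤)
    -- `M` is the smallest subspace of `V` containing `Φ` stable under `𝔤` and `K∞`:
    (M : Submodule ℂ V) (hΦM : Φ ∈ M)
    (hM𝔤 : ∀ X : 𝔤, ∀ v ∈ M, ⁅X, v⁆ ∈ M)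
    (hMK : ∀ κ : Kinf, ∀ v ∈ M, ρ κ v ∈ M)
    (hMmin : ∀ W : Submodule ℂ V, Φ ∈ W →
      (∀ X : 𝔤, ∀ v ∈ W, ⁅X, v⁆ ∈ W) → (∀ κ : Kinf, ∀ v ∈ W, ρ κ v ∈ W) → M ≤ W) :
    ∀ v : V, (∀ k ∈ K, σ k v = v) → v ∈ M := by
  intro v hv
  have hMfix : ∀ m ∈ M, ∀ k ∈ K, σ k m = m := fun m hm k hk => by
    simpa using Module.End.mem_eigenspace_iff.1 <| le_eigenspace_of_commute ρ hMmin
      (T := σ k) (hcomm𝔤 k) (hcommK k) (c := 1) (by simpa using hfix k hk) hm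
  have : ∀ h : H, Finite (orbit K (h : H ⧸ K)) := fun h => by
    obtain ⟨n, r, hU, hD⟩ := hdec h
    exact .of_equiv _ (orbitEquivOfDecomposition hU hD)
  let _ := fun h : H => Fintype.ofFinite (orbit K (h : H ⧸ K))
  refine mem_of_mem_iSup_map_of_fixed σ hMfix (fun h m hm => ?_)
    ((iSup_map_eq_top ρ σ hcomm𝔤 hcommK hgen hΦM hM𝔤 hMK).symm ▸ Submodule.mem_top) hv
  obtain ⟨n, r, hU, hD⟩ := hdec h
  rw [sum_orbit_apply_out_eq_sum_apply σ (hMfix m hm) hU hD]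
  exact sum_apply_mem_of_sum_apply_eq_smul ρ σ hcomm𝔤 hcommK hMmin r
    (heigen h n r hU hD).choose_spec hm

/-- Let `V` be a complex vector space with a `𝔤`-module structure (`𝔤` a complex Lie
algebra), a ℂ-linear action of a group `K∞` and a ℂ-linear action of a group `H` commuting
with both.  Let `K ≤ H` be a subgroup such that every double coset `KhK` is a finite
disjoint union of left cosets of `K`.  Let `Φ ≠ 0` be such that: (i) `Φ` is `K`-fixed;
(ii) `Φ` is a Hecke eigenvector: for every `h` and disjoint decomposition `KhK = ⊔ hᵢK`,
`∑ᵢ hᵢ·Φ` is a multiple of `Φ`; (iii) `V` is the smallest subspace containing `Φ` stable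
under `𝔤`, `K∞` and `H`.  Let `M` be the smallest subspace containing `Φ` stable under `𝔤`
and `K∞`.  Then every `K`-fixed vector of `V` lies in `M`. -/
theorem stmt_9 {𝔤 V Kinf H : Type*} [LieRing 𝔤] [LieAlgebra ℂ 𝔤]
    [AddCommGroup V] [Module ℂ V] [LieRingModule 𝔤 V] [LieModule ℂ 𝔤 V]
    [Group Kinf] [Group H]
    (ρ : Kinf →* (V ≃ₗ[ℂ] V)) (σ : H →* (V ≃ₗ[ℂ] V))
    -- the `H`-action commutes with the `𝔤`-action and the `K∞`-action:
    (hcomm𝔤 : ∀ (h : H) (X : 𝔤) (v : V), σ h ⁅X, v⁆ = ⁅X, σ h v⁆)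
    (hcommK : ∀ (h : H) (κ : Kinf) (v : V), σ h (ρ κ v) = ρ κ (σ h v))
    (K : Subgroup H)
    (hdec : ∀ h : H, ∃ (n : ℕ) (r : Fin n → H),
      doubleCoset K h = ⋃ i, leftTranslate (r i) (K : Set H) ∧
      ∀ i j, i ≠ j →
        Disjoint (leftTranslate (r i) (K : Set H)) (leftTranslate (r j) (K : Set H)))
    (Φ : V) (hΦ : Φ ≠ 0)
    -- (i) `Φ` is fixed by every element of `K`:
    (hfix : ∀ k ∈ K, σ k Φ = Φ)
    -- (ii) `Φ` is an eigenvector of all Hecke operators: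
    (heigen : ∀ (h : H) (n : ℕ) (r : Fin n → H),
      doubleCoset K h = ⋃ i, leftTranslate (r i) (K : Set H) →
      (∀ i j, i ≠ j →
        Disjoint (leftTranslate (r i) (K : Set H)) (leftTranslate (r j) (K : Set H))) →
      ∃ c : ℂ, ∑ i, σ (r i) Φ = c • Φ)
    -- (iii) `V` is generated by `Φ` under the actions of `𝔤`, `K∞` and `H`:
    (hgen : ∀ W : Submodule ℂ V, Φ ∈ W →
      (∀ X : 𝔤, ∀ v ∈ W, ⁅X, v⁆ ∈ W) → (∀ κ : Kinf, ∀ v ∈ W, ρ κ v ∈ W) →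
      (∀ h : H, ∀ v ∈ W, σ h v ∈ W) → W = ⊤)
    -- `M` is the smallest subspace of `V` containing `Φ` stable under `𝔤` and `K∞`:
    (M : Submodule ℂ V) (hΦM : Φ ∈ M)
    (hM𝔤 : ∀ X : 𝔤, ∀ v ∈ M, ⁅X, v⁆ ∈ M)
    (hMK : ∀ κ : Kinf, ∀ v ∈ M, ρ κ v ∈ M)
    (hMmin : ∀ W : Submodule ℂ V, Φ ∈ W →
      (∀ X : 𝔤, ∀ v ∈ W, ⁅X, v⁆ ∈ W) → (∀ κ : Kinf, ∀ v ∈ W, ρ κ v ∈ W) → M ≤ W) :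
    ∀ v : V, (∀ k ∈ K, σ k v = v) → v ∈ M :=
  stmt_9_general ρ σ hcomm𝔤 hcommK K hdec Φ hfix heigen hgen M hΦM hM𝔤 hMK hMmin
end

section
/- Let V be a complex vector space equipped with a 𝔤-module structure for a Lie algebra 𝔤 over ℂ, a ℂ-linear action of a group K∞, and a ℂ-linear action of a group H, such that the H-action commutes with the 𝔤-action and with the K∞-action. Call a subspace of V invariant if it is stable under the actions of 𝔤, K∞ and H, and assume every invariant subspace of V has an invariant complement. Let K be a subgroup of H such that for every h ∈ H the double coset KhK is a finite disjoint union of left cosets of K. Let Φ ∈ V be a nonzero vector such that: (i) the smallest subspace M of V containing Φ and stable under 𝔤 and K∞ is irreducible under the joint action of 𝔤 and K∞, i.e., M has no subspaces stable under both 𝔤 and K∞ other than 0 and M; (ii) Φ is fixed by every element of K, and for every h ∈ H, writing KhK as a disjoint union of left cosets h₁K, …, h_nK, the vector Σ_{i=1}^n h_i·Φ is a scalar multiple of Φ; (iii) V equals the smallest subspace of V containing Φ that is stable under the actions of 𝔤, K∞ and H. Then V has no invariant subspaces other than 0 and V. -/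
open MulAction Module.End

lemma MulAction.range_ofQuotientStabilizer (G : Type*) {X : Type*} [Group G] [MulAction G X]
    (x : X) : Set.range (ofQuotientStabilizer G x) = orbit G x := by
  ext y
  constructor
  · rintro ⟨p, rfl⟩
    exact ofQuotientStabilizer_mem_orbit G x p
  · rintro ⟨g, rfl⟩
    exact ⟨g, ofQuotientStabilizer_mk G x g⟩

lemma Subgroup.sum_quotientMapOfLE {G M : Type*} [Group G] [AddCommMonoid M] {L S : Subgroup G}
    (hLS : L ≤ S) [Fintype (G ⧸ L)] [Fintype (G ⧸ S)] (f : G ⧸ S → M) :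
    ∑ q : G ⧸ L, f (quotientMapOfLE hLS q) = L.relIndex S • ∑ p, f p := by
  have : Finite ((G ⧸ S) × S ⧸ L.subgroupOf S) := .of_equiv _ (quotientEquivProdOfLE hLS)
  have := Finite.prod_right (G ⧸ S) (β := S ⧸ L.subgroupOf S)
  let _ := Fintype.ofFinite (S ⧸ L.subgroupOf S)
  rw [Fintype.sum_equiv (quotientEquivProdOfLE hLS) (fun q => f (quotientMapOfLE hLS q))
      (fun x => f x.1) fun _ => rfl,
    Fintype.sum_prod_type, Finset.smul_sum]
  simp [relIndex, index_eq_card, Nat.card_eq_fintype_card]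

lemma Fintype.sum_comp_eq_of_range_eq {ι κ α M : Type*} [Fintype ι] [Fintype κ]
    [AddCommMonoid M] {f : ι → α} {g : κ → α} (hf : f.Injective) (hg : g.Injective)
    (hfg : Set.range f = Set.range g) (F : α → M) : ∑ i, F (f i) = ∑ j, F (g j) := by
  rw [← finsum_eq_sum_of_fintype, ← finsum_eq_sum_of_fintype, ← finsum_mem_range hf,
    ← finsum_mem_range hg, hfg]

lemma Submodule.projection_apply_comm {R E : Type*} [Ring R] [AddCommGroup E] [Module R E]
    {p q : Submodule R E} (hpq : IsCompl p q) {f : Module.End R E} (hp : p ≤ p.comap f)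
    (hq : q ≤ q.comap f) (x : E) : p.projection q hpq (f x) = f (p.projection q hpq x) := by
  have := (LinearMap.IsIdempotentElem.commute_iff (T := f) (isIdempotentElem_projection hpq)).2
    ⟨by rwa [range_projection, mem_invtSubmodule], by rwa [ker_projection, mem_invtSubmodule]⟩
  exact LinearMap.congr_fun this.eq x

lemma Module.End.iInf_eigenspace_le_comap {R M ι : Type*} [CommRing R] [AddCommGroup M]
    [Module R M] (A : ι → End R M) (μ : ι → R) {f : End R M} (hf : ∀ i, Commute (A i) f) :
    ⨅ i, eigenspace (A i) (μ i) ≤ (⨅ i, eigenspace (A i) (μ i)).comap f := by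
  intro x hx
  simp only [Submodule.mem_comap, Submodule.mem_iInf, mem_eigenspace_iff] at hx ⊢
  intro i
  rw [← mul_apply, (hf i).eq, mul_apply, hx i, map_smul]

section CosetDecomposition

variable {H : Type*} [Group H] {K : Subgroup H}

def IsLeftCosetDecomposition (K : Subgroup H) (h : H) {n : ℕ} (r : Fin n → H) : Prop :=
  doubleCoset K h = ⋃ i, leftTranslate (r i) (K : Set H) ∧
    ∀ i j, i ≠ j → Disjoint (leftTranslate (r i) (K : Set H)) (leftTranslate (r j) (K : Set H))

lemma mem_leftTranslate_iff {a x : H} : x ∈ leftTranslate a (K : Set H) ↔ (x : H ⧸ K) = a :=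
  ⟨by rintro ⟨s, hs, rfl⟩; exact QuotientGroup.mk_mul_of_mem a hs,
    fun hx => ⟨a⁻¹ * x, QuotientGroup.eq.1 hx.symm, by group⟩⟩

lemma mem_doubleCoset_iff {h x : H} :
    x ∈ doubleCoset K h ↔ (x : H ⧸ K) ∈ orbit K (h : H ⧸ K) := by
  constructor
  · rintro ⟨k₁, hk₁, k₂, hk₂, rfl⟩
    refine ⟨⟨k₁, hk₁⟩, ?_⟩
    change ((k₁ * h : H) : H ⧸ K) = _
    rw [QuotientGroup.mk_mul_of_mem _ hk₂]
  · rintro ⟨k, hk⟩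
    exact ⟨k, k.2, (k * h)⁻¹ * x, QuotientGroup.eq.1 hk, by group⟩

namespace IsLeftCosetDecomposition

variable {h : H} {n : ℕ} {r : Fin n → H}

lemma range_eq (hr : IsLeftCosetDecomposition K h r) :
    Set.range (fun i => (r i : H ⧸ K)) = orbit K (h : H ⧸ K) := by
  ext y
  obtain ⟨x, rfl⟩ := QuotientGroup.mk_surjective y
  rw [← mem_doubleCoset_iff, hr.1]
  simp [mem_leftTranslate_iff, eq_comm]

lemma injective (hr : IsLeftCosetDecomposition K h r) : (fun i => (r i : H ⧸ K)).Injective := by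
  intro i j hij
  by_contra hne
  exact Set.disjoint_left.1 (hr.2 i j hne) (mem_leftTranslate_iff.2 rfl)
    (mem_leftTranslate_iff.2 hij)

lemma finiteIndex_stabilizer (hr : IsLeftCosetDecomposition K h r) :
    (stabilizer K (h : H ⧸ K)).FiniteIndex := by
  refine ⟨?_⟩
  rw [index_stabilizer, ← hr.range_eq]
  exact Set.ncard_ne_zero_of_mem (hr.range_eq ▸ mem_orbit_self _) (Set.finite_range _)

end IsLeftCosetDecomposition

end CosetDecomposition

section Averaging

variable {R V H : Type*} [Semiring R] [AddCommMonoid V] [Module R V] [Group H]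
  (σ : H →* (V ≃ₗ[R] V)) {K : Subgroup H}

def heckeOperator {n : ℕ} (r : Fin n → H) : Module.End R V :=
  ∑ i, (σ (r i) : Module.End R V)

lemma heckeOperator_apply {n : ℕ} (r : Fin n → H) (v : V) :
    heckeOperator σ r v = ∑ i, σ (r i) v := by
  simp [heckeOperator, LinearMap.sum_apply]

lemma apply_out_mk_of_forall_fixed {m : V} (hm : ∀ k ∈ K, σ k m = m) (x : H) :
    σ (x : H ⧸ K).out m = σ x m := by
  obtain ⟨k, hk⟩ := QuotientGroup.mk_out_eq_mul K x
  rw [hk, map_mul, LinearEquiv.mul_apply, hm k k.2]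

variable (K) in
/-- Uses arbitrary representatives `q.out`, so it is only meaningful on `L`-fixed vectors. -/
noncomputable def cosetAverage (L : Subgroup K) [Fintype (K ⧸ L)] : Module.End R V :=
  ∑ q : K ⧸ L, (σ q.out : Module.End R V)

lemma cosetAverage_apply_of_forall_fixed (L : Subgroup K) [Fintype (K ⧸ L)] {v : V}
    (hv : ∀ k ∈ K, σ k v = v) : cosetAverage σ K L v = L.index • v := by
  simp [cosetAverage, LinearMap.sum_apply, hv, Subgroup.index_eq_card, Nat.card_eq_fintype_card]

lemma cosetAverage_apply_translate {h : H} {n : ℕ} {r : Fin n → H}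
    (hr : IsLeftCosetDecomposition K h r) {m : V} (hm : ∀ k ∈ K, σ k m = m) {L : Subgroup K}
    [Fintype (K ⧸ L)] (hL : L ≤ stabilizer K (h : H ⧸ K)) :
    cosetAverage σ K L (σ h m) = L.relIndex (stabilizer K (h : H ⧸ K)) • heckeOperator σ r m := by
  have := hr.finiteIndex_stabilizer
  let _ := Fintype.ofFinite (K ⧸ stabilizer K (h : H ⧸ K))
  let F : H ⧸ K → V := fun y => σ y.out m
  have hF : ∀ x : H, F x = σ x m := apply_out_mk_of_forall_fixed σ hm
  have hFq : ∀ q : K ⧸ L, F (ofQuotientStabilizer K (h : H ⧸ K) (Subgroup.quotientMapOfLE hL q))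
      = σ q.out (σ h m) := by
    intro q
    conv_lhs => rw [← QuotientGroup.out_eq' q]
    exact (hF ((q.out : H) * h)).trans (by rw [map_mul, LinearEquiv.mul_apply])
  calc cosetAverage σ K L (σ h m)
      = ∑ q : K ⧸ L, F (ofQuotientStabilizer K (h : H ⧸ K) (Subgroup.quotientMapOfLE hL q)) := by
        simp [cosetAverage, LinearMap.sum_apply, hFq]
    _ = L.relIndex (stabilizer K (h : H ⧸ K)) • ∑ p, F (ofQuotientStabilizer K (h : H ⧸ K) p) :=
        Subgroup.sum_quotientMapOfLE hL fun p => F (ofQuotientStabilizer K (h : H ⧸ K) p)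
    _ = L.relIndex (stabilizer K (h : H ⧸ K)) • heckeOperator σ r m := by
        rw [Fintype.sum_comp_eq_of_range_eq (injective_ofQuotientStabilizer K _) hr.injective
          ((range_ofQuotientStabilizer K _).trans hr.range_eq.symm), heckeOperator_apply]
        simp only [hF]

lemma iSup_map_le_comap_of_commute {M : Submodule R V} {f : Module.End R V}
    (hM : M ≤ M.comap f) (hf : ∀ h, Commute (σ h : Module.End R V) f) :
    ⨆ h, M.map (σ h : V →ₗ[R] V) ≤ (⨆ h, M.map (σ h : V →ₗ[R] V)).comap f :=
  iSup_le fun h => by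
    rintro _ ⟨m, hm, rfl⟩
    exact Submodule.mem_iSup_of_mem h
      (Submodule.mem_map.2 ⟨f m, hM hm, LinearMap.congr_fun (hf h).eq m⟩)

lemma iSup_map_le_comap_self (M : Submodule R V) (g : H) :
    ⨆ h, M.map (σ h : V →ₗ[R] V) ≤ (⨆ h, M.map (σ h : V →ₗ[R] V)).comap (σ g : Module.End R V) :=
  iSup_le fun h => by
    rintro _ ⟨m, hm, rfl⟩
    exact Submodule.mem_iSup_of_mem (g * h) (Submodule.mem_map.2 ⟨m, hm, by simp⟩)

end Averaging

theorem mem_of_forall_fixed_of_mem_iSup_map {𝕜 V H : Type*} [DivisionSemiring 𝕜] [CharZero 𝕜]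
    [AddCommMonoid V] [Module 𝕜 V] [Group H] (σ : H →* (V ≃ₗ[𝕜] V)) {K : Subgroup H}
    {n : H → ℕ} {r : ∀ h, Fin (n h) → H} (hr : ∀ h, IsLeftCosetDecomposition K h (r h))
    {M : Submodule 𝕜 V} (hMfix : ∀ m ∈ M, ∀ k ∈ K, σ k m = m)
    (hMhecke : ∀ h, ∀ m ∈ M, heckeOperator σ (r h) m ∈ M)
    {v : V} (hv : v ∈ ⨆ h, M.map (σ h : V →ₗ[𝕜] V)) (hvfix : ∀ k ∈ K, σ k v = v) : v ∈ M := by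
  obtain ⟨f, hfM, rfl⟩ := (Submodule.mem_iSup_iff_exists_finsupp _ _).1 hv
  let L : Subgroup K := ⨅ h : f.support, stabilizer K ((h : H) : H ⧸ K)
  have : L.FiniteIndex := Subgroup.finiteIndex_iInf fun h => (hr h).finiteIndex_stabilizer
  let _ := Fintype.ofFinite (K ⧸ L)
  have hindex : (L.index : 𝕜) ≠ 0 := Nat.cast_ne_zero.2 Subgroup.FiniteIndex.index_ne_zero
  rw [← Submodule.smul_mem_iff M hindex, Nat.cast_smul_eq_nsmul,
    ← cosetAverage_apply_of_forall_fixed σ L hvfix, Finsupp.sum, map_sum]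
  refine Submodule.sum_mem M fun h hh => ?_
  obtain ⟨m, hm, hmh⟩ := hfM h
  rw [← hmh, LinearEquiv.coe_coe, cosetAverage_apply_translate σ (hr h) (hMfix m hm)
    (iInf_le (fun h : f.support => stabilizer K ((h : H) : H ⧸ K)) ⟨h, hh⟩)]
  exact Submodule.smul_of_tower_mem M _ (hMhecke h m hm)

section HeckeEigenspace

variable {R V H : Type*} [CommRing R] [AddCommGroup V] [Module R V] [Group H]
  (σ : H →* (V ≃ₗ[R] V)) (K : Subgroup H) {n : H → ℕ} (r : ∀ h, Fin (n h) → H) (c : H → R)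

def heckeEigenspace : Submodule R V :=
  (⨅ k : K, eigenspace (σ k : Module.End R V) 1) ⊓ ⨅ h, eigenspace (heckeOperator σ (r h)) (c h)

variable {σ K r c} in
lemma mem_heckeEigenspace {v : V} :
    v ∈ heckeEigenspace σ K r c ↔
      (∀ k ∈ K, σ k v = v) ∧ ∀ h, heckeOperator σ (r h) v = c h • v := by
  simp [heckeEigenspace]

lemma heckeEigenspace_le_comap {f : Module.End R V} (hf : ∀ h, Commute (σ h : Module.End R V) f) :
    heckeEigenspace σ K r c ≤ (heckeEigenspace σ K r c).comap f := by
  rw [heckeEigenspace, Submodule.comap_inf]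
  exact inf_le_inf (iInf_eigenspace_le_comap _ _ fun k => hf k)
    (iInf_eigenspace_le_comap _ _ fun h => Commute.sum_left _ _ _ fun i _ => hf (r h i))

end HeckeEigenspace

theorem stmt_10_general {𝔤 V Kinf H : Type*} [LieRing 𝔤] [LieAlgebra ℂ 𝔤]
    [AddCommGroup V] [Module ℂ V] [LieRingModule 𝔤 V] [LieModule ℂ 𝔤 V]
    [Group Kinf] [Group H]
    (ρ : Kinf →* (V ≃ₗ[ℂ] V)) (σ : H →* (V ≃ₗ[ℂ] V))
    -- the `H`-action commutes with the `𝔤`-action and the `K∞`-action: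
    (hcomm𝔤 : ∀ (h : H) (X : 𝔤) (v : V), σ h ⁅X, v⁆ = ⁅X, σ h v⁆)
    (hcommK : ∀ (h : H) (κ : Kinf) (v : V), σ h (ρ κ v) = ρ κ (σ h v))
    -- every invariant subspace has an invariant complement:
    (hcompl : ∀ W : Submodule ℂ V,
      (∀ X : 𝔤, ∀ v ∈ W, ⁅X, v⁆ ∈ W) → (∀ κ : Kinf, ∀ v ∈ W, ρ κ v ∈ W) →
      (∀ h : H, ∀ v ∈ W, σ h v ∈ W) →
      ∃ W' : Submodule ℂ V,
        ((∀ X : 𝔤, ∀ v ∈ W', ⁅X, v⁆ ∈ W') ∧ (∀ κ : Kinf, ∀ v ∈ W', ρ κ v ∈ W') ∧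
         (∀ h : H, ∀ v ∈ W', σ h v ∈ W')) ∧
        IsCompl W W')
    (K : Subgroup H)
    (hdec : ∀ h : H, ∃ (n : ℕ) (r : Fin n → H),
      doubleCoset K h = ⋃ i, leftTranslate (r i) (K : Set H) ∧
      ∀ i j, i ≠ j →
        Disjoint (leftTranslate (r i) (K : Set H)) (leftTranslate (r j) (K : Set H)))
    (Φ : V)
    -- `M` is the smallest subspace of `V` containing `Φ` stable under `𝔤` and `K∞` ...
    (M : Submodule ℂ V) (hΦM : Φ ∈ M)
    (hM𝔤 : ∀ X : 𝔤, ∀ v ∈ M, ⁅X, v⁆ ∈ M)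
    (hMK : ∀ κ : Kinf, ∀ v ∈ M, ρ κ v ∈ M)
    (hMmin : ∀ W : Submodule ℂ V, Φ ∈ W →
      (∀ X : 𝔤, ∀ v ∈ W, ⁅X, v⁆ ∈ W) → (∀ κ : Kinf, ∀ v ∈ W, ρ κ v ∈ W) → M ≤ W)
    -- (i) ... and `M` is irreducible under the joint action of `𝔤` and `K∞`:
    (hMirr : ∀ W ≤ M, (∀ X : 𝔤, ∀ v ∈ W, ⁅X, v⁆ ∈ W) →
      (∀ κ : Kinf, ∀ v ∈ W, ρ κ v ∈ W) → W = ⊥ ∨ W = M)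
    -- (ii) `Φ` is fixed by `K` and is an eigenvector of all Hecke operators:
    (hfix : ∀ k ∈ K, σ k Φ = Φ)
    (heigen : ∀ (h : H) (n : ℕ) (r : Fin n → H),
      doubleCoset K h = ⋃ i, leftTranslate (r i) (K : Set H) →
      (∀ i j, i ≠ j →
        Disjoint (leftTranslate (r i) (K : Set H)) (leftTranslate (r j) (K : Set H))) →
      ∃ c : ℂ, ∑ i, σ (r i) Φ = c • Φ)
    -- (iii) `V` is generated by `Φ` under the actions of `𝔤`, `K∞` and `H`:
    (hgen : ∀ W : Submodule ℂ V, Φ ∈ W →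
      (∀ X : 𝔤, ∀ v ∈ W, ⁅X, v⁆ ∈ W) → (∀ κ : Kinf, ∀ v ∈ W, ρ κ v ∈ W) →
      (∀ h : H, ∀ v ∈ W, σ h v ∈ W) → W = ⊤) :
    ∀ W : Submodule ℂ V,
      (∀ X : 𝔤, ∀ v ∈ W, ⁅X, v⁆ ∈ W) → (∀ κ : Kinf, ∀ v ∈ W, ρ κ v ∈ W) →
      (∀ h : H, ∀ v ∈ W, σ h v ∈ W) → W = ⊥ ∨ W = ⊤ := by
  intro W hW𝔤 hWK hWH
  choose n r hr using hdec
  choose c hc using fun h => heigen h (n h) (r h) (hr h).1 (hr h).2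
  have lie_commute : ∀ X h, Commute (σ h : Module.End ℂ V) (LieModule.toEnd ℂ 𝔤 V X) :=
    fun X h => LinearMap.ext (hcomm𝔤 h X)
  have rho_commute : ∀ κ h, Commute (σ h : Module.End ℂ V) (ρ κ : Module.End ℂ V) :=
    fun κ h => LinearMap.ext (hcommK h κ)
  have hM_eigen : M ≤ heckeEigenspace σ K r c :=
    hMmin _ (mem_heckeEigenspace.2 ⟨hfix, fun h => (heckeOperator_apply σ _ Φ).trans (hc h)⟩)
      (fun X => heckeEigenspace_le_comap σ K r c (lie_commute X))
      (fun κ => heckeEigenspace_le_comap σ K r c (rho_commute κ))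
  have hspan : ⨆ h, M.map (σ h : V →ₗ[ℂ] V) = ⊤ :=
    hgen _ (Submodule.mem_iSup_of_mem 1 (Submodule.mem_map.2 ⟨Φ, hΦM, by simp⟩))
      (fun X => iSup_map_le_comap_of_commute σ (hM𝔤 X) (lie_commute X))
      (fun κ => iSup_map_le_comap_of_commute σ (hMK κ) (rho_commute κ))
      (iSup_map_le_comap_self σ M)
  have hfixed : ∀ v, (∀ k ∈ K, σ k v = v) → v ∈ M := fun v hv =>
    mem_of_forall_fixed_of_mem_iSup_map σ hr (fun m hm => (mem_heckeEigenspace.1 (hM_eigen hm)).1)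
      (fun h m hm => (mem_heckeEigenspace.1 (hM_eigen hm)).2 h ▸ M.smul_mem _ hm)
      (hspan ▸ Submodule.mem_top) hv
  obtain ⟨W', ⟨hW'𝔤, hW'K, hW'H⟩, hWW'⟩ := hcompl W hW𝔤 hWK hWH
  have hw : W.projection W' hWW' Φ ∈ W ⊓ M :=
    ⟨Submodule.projection_apply_mem hWW' Φ, hfixed _ fun k hk =>
      (Submodule.projection_apply_comm hWW' (hWH k) (hW'H k) Φ).symm.trans
        (congrArg _ (hfix k hk))⟩
  rcases hMirr (W ⊓ M) inf_le_right (fun X v hv => ⟨hW𝔤 X v hv.1, hM𝔤 X v hv.2⟩)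
    (fun κ v hv => ⟨hWK κ v hv.1, hMK κ v hv.2⟩) with hWM | hWM
  · left
    rw [hWM, Submodule.mem_bot, Submodule.projection_apply_eq_zero_iff] at hw
    exact eq_bot_of_isCompl_top (hgen W' hw hW'𝔤 hW'K hW'H ▸ hWW')
  · right
    exact hgen W (Submodule.mem_inf.1 (hWM ▸ hΦM)).1 hW𝔤 hWK hWH

/-- Algebraic form of the main global theorem.  Let `V` be a complex vector space with a
`𝔤`-module structure (`𝔤` a complex Lie algebra), a ℂ-linear action of a group `K∞` and
a ℂ-linear action of a group `H` commuting with both; invariant subspaces (stable under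
`𝔤`, `K∞` and `H`) are assumed complemented.  `K ≤ H` is a subgroup with every double
coset `KhK` a finite disjoint union of left cosets of `K`.  Let `Φ ≠ 0` be such that:
(i) the smallest `(𝔤,K∞)`-stable subspace `M` containing `Φ` is irreducible under the
joint action of `𝔤` and `K∞`; (ii) `Φ` is `K`-fixed and a Hecke eigenvector: for every `h`
and disjoint decomposition `KhK = ⊔ hᵢK`, `∑ᵢ hᵢ·Φ` is a multiple of `Φ`; (iii) `V` is the
smallest subspace containing `Φ` stable under `𝔤`, `K∞` and `H`.  Then `V` has no invariant
subspaces other than `0` and `V`. -/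
theorem stmt_10 {𝔤 V Kinf H : Type*} [LieRing 𝔤] [LieAlgebra ℂ 𝔤]
    [AddCommGroup V] [Module ℂ V] [LieRingModule 𝔤 V] [LieModule ℂ 𝔤 V]
    [Group Kinf] [Group H]
    (ρ : Kinf →* (V ≃ₗ[ℂ] V)) (σ : H →* (V ≃ₗ[ℂ] V))
    -- the `H`-action commutes with the `𝔤`-action and the `K∞`-action:
    (hcomm𝔤 : ∀ (h : H) (X : 𝔤) (v : V), σ h ⁅X, v⁆ = ⁅X, σ h v⁆)
    (hcommK : ∀ (h : H) (κ : Kinf) (v : V), σ h (ρ κ v) = ρ κ (σ h v))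
    -- every invariant subspace has an invariant complement:
    (hcompl : ∀ W : Submodule ℂ V,
      (∀ X : 𝔤, ∀ v ∈ W, ⁅X, v⁆ ∈ W) → (∀ κ : Kinf, ∀ v ∈ W, ρ κ v ∈ W) →
      (∀ h : H, ∀ v ∈ W, σ h v ∈ W) →
      ∃ W' : Submodule ℂ V,
        ((∀ X : 𝔤, ∀ v ∈ W', ⁅X, v⁆ ∈ W') ∧ (∀ κ : Kinf, ∀ v ∈ W', ρ κ v ∈ W') ∧
         (∀ h : H, ∀ v ∈ W', σ h v ∈ W')) ∧
        IsCompl W W')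
    (K : Subgroup H)
    (hdec : ∀ h : H, ∃ (n : ℕ) (r : Fin n → H),
      doubleCoset K h = ⋃ i, leftTranslate (r i) (K : Set H) ∧
      ∀ i j, i ≠ j →
        Disjoint (leftTranslate (r i) (K : Set H)) (leftTranslate (r j) (K : Set H)))
    (Φ : V) (hΦ : Φ ≠ 0)
    -- `M` is the smallest subspace of `V` containing `Φ` stable under `𝔤` and `K∞` ...
    (M : Submodule ℂ V) (hΦM : Φ ∈ M)
    (hM𝔤 : ∀ X : 𝔤, ∀ v ∈ M, ⁅X, v⁆ ∈ M)
    (hMK : ∀ κ : Kinf, ∀ v ∈ M, ρ κ v ∈ M)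
    (hMmin : ∀ W : Submodule ℂ V, Φ ∈ W →
      (∀ X : 𝔤, ∀ v ∈ W, ⁅X, v⁆ ∈ W) → (∀ κ : Kinf, ∀ v ∈ W, ρ κ v ∈ W) → M ≤ W)
    -- (i) ... and `M` is irreducible under the joint action of `𝔤` and `K∞`:
    (hMirr : ∀ W ≤ M, (∀ X : 𝔤, ∀ v ∈ W, ⁅X, v⁆ ∈ W) →
      (∀ κ : Kinf, ∀ v ∈ W, ρ κ v ∈ W) → W = ⊥ ∨ W = M)
    -- (ii) `Φ` is fixed by `K` and is an eigenvector of all Hecke operators: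
    (hfix : ∀ k ∈ K, σ k Φ = Φ)
    (heigen : ∀ (h : H) (n : ℕ) (r : Fin n → H),
      doubleCoset K h = ⋃ i, leftTranslate (r i) (K : Set H) →
      (∀ i j, i ≠ j →
        Disjoint (leftTranslate (r i) (K : Set H)) (leftTranslate (r j) (K : Set H))) →
      ∃ c : ℂ, ∑ i, σ (r i) Φ = c • Φ)
    -- (iii) `V` is generated by `Φ` under the actions of `𝔤`, `K∞` and `H`:
    (hgen : ∀ W : Submodule ℂ V, Φ ∈ W →
      (∀ X : 𝔤, ∀ v ∈ W, ⁅X, v⁆ ∈ W) → (∀ κ : Kinf, ∀ v ∈ W, ρ κ v ∈ W) →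
      (∀ h : H, ∀ v ∈ W, σ h v ∈ W) → W = ⊤) :
    ∀ W : Submodule ℂ V,
      (∀ X : 𝔤, ∀ v ∈ W, ⁅X, v⁆ ∈ W) → (∀ κ : Kinf, ∀ v ∈ W, ρ κ v ∈ W) →
      (∀ h : H, ∀ v ∈ W, σ h v ∈ W) → W = ⊥ ∨ W = ⊤ :=
  stmt_10_general ρ σ hcomm𝔤 hcommK hcompl K hdec Φ M hΦM hM𝔤 hMK hMmin hMirr hfix heigen hgen
end
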